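/- arXiv:1905.03410 — 4 statements merged into one kernel-verified Lean document; each statement's English description precedes it below -/
import Mathlib

section
/- Fix θ ∈ (0,1) and a sequence q = q_n with q = Θ(n^{2(θ−1)}), and let G ~ ER(n,q) with average number of edges k̄ = q·C(n,2). For any sequence of non-adaptive test designs with t = t_n tests and any decoders Ĝ, if the error probability p_e = P[Ĝ ≠ G] tends to 0 as n → ∞, then for every η > 0 one has t ≥ (1−η)·k̄·log₂(1/q) for all sufficiently large n. -/
open scoped BigOperators Classical
open Finset Filter

noncomputable section

/-- The set of all potential edges: unordered pairs of distinct nodes of `Fin n`. -/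
def allPairs (n : ℕ) : Finset (Sym2 (Fin n)) :=
  Finset.univ.filter fun e => ¬ e.IsDiag

/-- Both endpoints of the pair `e` lie in the test `L`. -/
def pairIn {n : ℕ} (e : Sym2 (Fin n)) (L : Finset (Fin n)) : Prop :=
  ∀ v ∈ e, v ∈ L

/-- The test `L` covers some edge of the edge set `E` (positive outcome `Y = 1`). -/
def covers {n : ℕ} (E : Finset (Sym2 (Fin n))) (L : Finset (Fin n)) : Prop :=
  ∃ e ∈ E, pairIn e L

/-- ER(n,q) probability weight of a given edge set `E`. -/
def erWeight (n : ℕ) (q : ℝ) (E : Finset (Sym2 (Fin n))) : ℝ :=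
  q ^ E.card * (1 - q) ^ ((allPairs n).card - E.card)

/-- Probability of an event under the Erdős–Rényi random graph ER(n,q). -/
def erProb (n : ℕ) (q : ℝ) (A : Finset (Sym2 (Fin n)) → Prop) : ℝ :=
  ∑ E ∈ (allPairs n).powerset, if A E then erWeight n q E else 0

/-- Bernoulli(p) probability weight of a single test `L ⊆ {1,…,n}`. -/
def testWeight (n : ℕ) (p : ℝ) (L : Finset (Fin n)) : ℝ :=
  p ^ L.card * (1 - p) ^ (n - L.card)

/-- Probability of an event for a single Bernoulli(p) test. -/
def bernProb (n : ℕ) (p : ℝ) (A : Finset (Fin n) → Prop) : ℝ :=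
  ∑ L : Finset (Fin n), if A L then testWeight n p L else 0

/-- Probability weight of `t` i.i.d. Bernoulli(p) tests. -/
def testsWeight (n t : ℕ) (p : ℝ) (Ls : Fin t → Finset (Fin n)) : ℝ :=
  ∏ i, testWeight n p (Ls i)

/-- Probability of an event for `t` i.i.d. Bernoulli(p) tests. -/
def bernTestsProb (n t : ℕ) (p : ℝ) (A : (Fin t → Finset (Fin n)) → Prop) : ℝ :=
  ∑ Ls : Fin t → Finset (Fin n), if A Ls then testsWeight n t p Ls else 0

/-- Joint probability over an ER(n,q) graph and `t` i.i.d. Bernoulli(p) tests. -/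
def erTestsProb (n t : ℕ) (q p : ℝ)
    (A : Finset (Sym2 (Fin n)) → (Fin t → Finset (Fin n)) → Prop) : ℝ :=
  ∑ E ∈ (allPairs n).powerset, ∑ Ls : Fin t → Finset (Fin n),
    if A E Ls then erWeight n q E * testsWeight n t p Ls else 0

/-- Degree of node `v` in the edge set `E`. -/
def degOf {n : ℕ} (E : Finset (Sym2 (Fin n))) (v : Fin n) : ℕ :=
  (E.filter fun e => v ∈ e).card

/-- Maximum degree of the edge set `E`. -/
def maxDeg {n : ℕ} (E : Finset (Sym2 (Fin n))) : ℕ :=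
  Finset.univ.sup (degOf E)

/-- Average number of edges of ER(n, q n): `k̄ = q·C(n,2)`. -/
def kbar (q : ℕ → ℝ) (n : ℕ) : ℝ := q n * (n.choose 2 : ℝ)

/-- Two pairs are vertex-disjoint. -/
def sym2Disjoint {n : ℕ} (e e' : Sym2 (Fin n)) : Prop := ∀ v, v ∈ e → v ∉ e'

open Real InformationTheory

/-!
For fixed tests, the outcome vector takes at most `2 ^ t` values, so a decoder is correct on at
most `2 ^ t` graphs, and each graph with at least `(1 - δ) k̄` edges has probability at most
`q ^ ((1 - δ) k̄)`. By Chernoff's bound the graphs with fewer edges have total probability at most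
`exp (-klFun (1 - δ) k̄)`. The success probability is therefore at most
`exp (-klFun (1 - δ) k̄) + 2 ^ t q ^ ((1 - δ) k̄)`, and if `t ≤ (1 - 2δ) k̄ log₂ (1 / q)` both terms
are `exp (-Ω(k̄))`. Since `q = Θ(n^{2(θ-1)})`, `k̄ = Θ(n^{2θ}) → ∞`, so the error probability
cannot tend to `0`.
-/

lemma klFun_pos {x : ℝ} (hx : 0 ≤ x) (hx1 : x ≠ 1) : 0 < klFun x :=
  (klFun_nonneg hx).lt_of_ne' fun h => hx1 ((klFun_eq_zero_iff hx).1 h)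

lemma card_allPairs (n : ℕ) : (allPairs n).card = n.choose 2 := by
  simpa [allPairs, Fintype.card_subtype] using Sym2.card_subtype_not_diag (α := Fin n)

lemma erWeight_nonneg {n : ℕ} {q : ℝ} (hq0 : 0 ≤ q) (hq1 : q ≤ 1) (E : Finset (Sym2 (Fin n))) :
    0 ≤ erWeight n q E := by
  have : 0 ≤ 1 - q := by linarith
  unfold erWeight
  positivity

lemma erWeight_le_pow_card {n : ℕ} {q : ℝ} (hq0 : 0 ≤ q) (hq1 : q ≤ 1)
    (E : Finset (Sym2 (Fin n))) : erWeight n q E ≤ q ^ E.card :=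
  mul_le_of_le_one_right (by positivity) (pow_le_one₀ (by linarith) (by linarith))

lemma erProb_add_erProb_not (n : ℕ) (q : ℝ) (A : Finset (Sym2 (Fin n)) → Prop) :
    erProb n q A + erProb n q (fun E => ¬ A E) = 1 := by
  have htotal : ∑ E ∈ (allPairs n).powerset, erWeight n q E = 1 := by
    simp [erWeight, sum_pow_mul_eq_add_pow]
  rw [erProb, erProb, ← sum_add_distrib, ← htotal]
  refine sum_congr rfl fun E _ => ?_
  by_cases h : A E <;> simp [h]

lemma erProb_le_add {n : ℕ} {q : ℝ} (hq0 : 0 ≤ q) (hq1 : q ≤ 1)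
    {A B C : Finset (Sym2 (Fin n)) → Prop} (h : ∀ E, A E → B E ∨ C E) :
    erProb n q A ≤ erProb n q B + erProb n q C := by
  rw [erProb, erProb, erProb, ← sum_add_distrib]
  refine sum_le_sum fun E _ => ?_
  have := erWeight_nonneg hq0 hq1 E
  by_cases hA : A E
  · rcases h E hA with hB | hC <;> split_ifs <;> simp_all
  · split_ifs <;> simp_all

lemma erProb_card_le_le_chernoff {n : ℕ} {q s : ℝ} (hq0 : 0 ≤ q) (hq1 : q ≤ 1) (hs0 : 0 < s)
    (hs1 : s ≤ 1) (τ : ℝ) :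
    erProb n q (fun E => (E.card : ℝ) ≤ τ) ≤ s ^ (-τ) * (q * s + (1 - q)) ^ n.choose 2 := by
  rw [← card_allPairs, ← sum_pow_mul_eq_add_pow, mul_sum, erProb]
  refine sum_le_sum fun E _ => ?_
  split_ifs with h
  · have hmarkov : 1 ≤ s ^ (-τ) * s ^ E.card := by
      rw [← rpow_natCast, ← rpow_add hs0]
      exact one_le_rpow_of_pos_of_le_one_of_nonpos hs0 hs1 (by linarith)
    calc erWeight n q E ≤ s ^ (-τ) * s ^ E.card * erWeight n q E :=
          le_mul_of_one_le_left (erWeight_nonneg hq0 hq1 E) hmarkov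
      _ = _ := by rw [erWeight, mul_pow]; ring
  · have : 0 ≤ 1 - q := by linarith
    have := rpow_nonneg hs0.le (-τ)
    positivity

lemma erProb_card_le_le_exp {n : ℕ} {q a : ℝ} (hq0 : 0 ≤ q) (hq1 : q ≤ 1) (ha0 : 0 < a)
    (ha1 : a ≤ 1) :
    erProb n q (fun E => (E.card : ℝ) ≤ a * (q * n.choose 2)) ≤
      exp (-(klFun a * (q * n.choose 2))) := by
  refine (erProb_card_le_le_chernoff hq0 hq1 ha0 ha1 _).trans ?_
  have hbase : q * a + (1 - q) ≤ exp (-(q * (1 - a))) := by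
    linarith [add_one_le_exp (-(q * (1 - a)))]
  calc a ^ (-(a * (q * n.choose 2))) * (q * a + (1 - q)) ^ n.choose 2
      ≤ exp (log a * -(a * (q * n.choose 2))) * exp (-(q * (1 - a))) ^ n.choose 2 := by
        rw [← rpow_def_of_pos ha0]
        gcongr
    _ = exp (-(klFun a * (q * n.choose 2))) := by
        rw [← exp_nat_mul, ← exp_add, klFun_apply]
        ring_nf

/-- A decoder that only sees `f E ∈ β` recovers at most `card β` graphs. -/
lemma erProb_decode_eq_and_le_card {β : Type*} [Fintype β] {n : ℕ} {q τ : ℝ} (hq0 : 0 < q)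
    (hq1 : q ≤ 1) (f : Finset (Sym2 (Fin n)) → β) (g : β → Finset (Sym2 (Fin n))) :
    erProb n q (fun E => g (f E) = E ∧ τ ≤ E.card) ≤ Fintype.card β * q ^ τ := by
  set S := (allPairs n).powerset.filter fun E => g (f E) = E ∧ τ ≤ E.card
  have hS : S.card ≤ Fintype.card β := by
    refine card_le_card_of_injOn f (fun _ _ => mem_coe.mpr (mem_univ _)) fun E₁ h₁ E₂ h₂ h => ?_
    rw [← (mem_filter.mp h₁).2.1, ← (mem_filter.mp h₂).2.1, h]
  have hweight : ∀ E ∈ S, erWeight n q E ≤ q ^ τ := fun E hE =>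
    (erWeight_le_pow_card hq0.le hq1 E).trans <| by
      rw [← rpow_natCast]
      exact rpow_le_rpow_of_exponent_ge hq0 hq1 (mem_filter.mp hE).2.2
  calc erProb n q (fun E => g (f E) = E ∧ τ ≤ E.card) = ∑ E ∈ S, erWeight n q E := by
        rw [erProb, sum_filter]
        exact sum_congr rfl fun E _ => by split_ifs <;> tauto
    _ ≤ S.card * q ^ τ := by simpa using sum_le_card_nsmul S _ _ hweight
    _ ≤ Fintype.card β * q ^ τ := by gcongr

lemma erProb_decode_eq_le {β : Type*} [Fintype β] {n : ℕ} {q a : ℝ} (hq0 : 0 < q) (hq1 : q ≤ 1)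
    (ha0 : 0 < a) (ha1 : a ≤ 1) (f : Finset (Sym2 (Fin n)) → β) (g : β → Finset (Sym2 (Fin n))) :
    erProb n q (fun E => g (f E) = E) ≤
      exp (-(klFun a * (q * n.choose 2))) + Fintype.card β * q ^ (a * (q * n.choose 2)) := by
  refine (erProb_le_add hq0.le hq1 fun E h => ?_).trans
    (add_le_add (erProb_card_le_le_exp hq0.le hq1 ha0 ha1)
      (erProb_decode_eq_and_le_card hq0 hq1 f g))
  exact (le_total _ _).imp id (And.intro h)

def errorProb (n t : ℕ) (q : ℝ) (D : (Fin t → Finset (Fin n)) → ℝ)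
    (dec : (Fin t → Finset (Fin n)) → (Fin t → Prop) → Finset (Sym2 (Fin n))) : ℝ :=
  ∑ Ls, D Ls * erProb n q (fun E => dec Ls (fun i => covers E (Ls i)) ≠ E)

lemma one_sub_errorProb_le {n t : ℕ} {q B : ℝ} {D : (Fin t → Finset (Fin n)) → ℝ}
    (hD0 : ∀ Ls, 0 ≤ D Ls) (hD1 : ∑ Ls, D Ls = 1)
    {dec : (Fin t → Finset (Fin n)) → (Fin t → Prop) → Finset (Sym2 (Fin n))}
    (hB : ∀ Ls, erProb n q (fun E => dec Ls (fun i => covers E (Ls i)) = E) ≤ B) :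
    1 - errorProb n t q D dec ≤ B :=
  calc 1 - errorProb n t q D dec
      = ∑ Ls, D Ls * erProb n q (fun E => dec Ls (fun i => covers E (Ls i)) = E) := by
        rw [errorProb, ← hD1, ← sum_sub_distrib]
        refine sum_congr rfl fun Ls _ => ?_
        linear_combination
          -D Ls * erProb_add_erProb_not n q (fun E => dec Ls (fun i => covers E (Ls i)) = E)
    _ ≤ ∑ Ls, D Ls * B := sum_le_sum fun Ls _ => mul_le_mul_of_nonneg_left (hB Ls) (hD0 Ls)
    _ = B := by rw [← sum_mul, hD1, one_mul]

lemma two_pow_mul_rpow_le_exp {t : ℕ} {q k δ : ℝ} (hq0 : 0 < q) (hq : q ≤ 1 / 2) (hk : 0 ≤ k)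
    (hδ : 0 ≤ δ) (ht : (t : ℝ) ≤ (1 - 2 * δ) * (k * logb 2 (1 / q))) :
    (2 : ℝ) ^ t * q ^ ((1 - δ) * k) ≤ exp (-(δ * log 2 * k)) := by
  have hlogb : logb 2 (1 / q) * log 2 = -log q := by
    rw [logb, one_div, log_inv]
    field_simp
  have hlogq : log q ≤ -log 2 := by
    simpa [one_div, log_inv] using log_le_log hq0 hq
  have ht' : t * log 2 ≤ (1 - 2 * δ) * k * -log q := by
    rw [← hlogb]
    nlinarith [log_pos one_lt_two]
  rw [rpow_def_of_pos hq0, ← exp_log two_pos, ← exp_nat_mul, ← exp_add, exp_log two_pos]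
  gcongr
  nlinarith [mul_nonneg hδ hk]

lemma one_sub_errorProb_le_exp_add_exp {n t : ℕ} {q δ : ℝ} (hq0 : 0 < q) (hq : q ≤ 1 / 2)
    (hδ0 : 0 < δ) (hδ1 : δ < 1) {D : (Fin t → Finset (Fin n)) → ℝ} (hD0 : ∀ Ls, 0 ≤ D Ls)
    (hD1 : ∑ Ls, D Ls = 1)
    (dec : (Fin t → Finset (Fin n)) → (Fin t → Prop) → Finset (Sym2 (Fin n)))
    (ht : (t : ℝ) ≤ (1 - 2 * δ) * (q * n.choose 2 * logb 2 (1 / q))) :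
    1 - errorProb n t q D dec ≤
      exp (-(klFun (1 - δ) * (q * n.choose 2))) + exp (-(δ * log 2 * (q * n.choose 2))) := by
  have hcard : Fintype.card (Fin t → Prop) = 2 ^ t := by simp [Fintype.card_prop]
  refine one_sub_errorProb_le hD0 hD1 fun Ls => ?_
  refine (erProb_decode_eq_le (a := 1 - δ) hq0 (by linarith) (by linarith) (by linarith)
    (fun E i => covers E (Ls i)) (dec Ls)).trans ?_
  rw [hcard]
  push_cast
  gcongr
  exact two_pow_mul_rpow_le_exp hq0 hq (by positivity) hδ0.le ht

lemma tendsto_zero_of_le_mul_rpow {f : ℕ → ℝ} {c r : ℝ} (hr : r < 0) (h0 : ∀ n, 0 ≤ f n)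
    (h : ∀ n : ℕ, f n ≤ c * (n : ℝ) ^ r) : Tendsto f atTop (nhds 0) := by
  have hpow : Tendsto (fun n : ℕ => (n : ℝ) ^ r) atTop (nhds 0) := by
    simpa [Function.comp_def] using
      (tendsto_rpow_neg_atTop (neg_pos.2 hr)).comp tendsto_natCast_atTop_atTop
  exact squeeze_zero h0 h (by simpa using hpow.const_mul c)

lemma tendsto_mul_choose_two_atTop {f : ℕ → ℝ} {c r : ℝ} (hc : 0 < c) (hr : -2 < r)
    (h : ∀ n : ℕ, c * (n : ℝ) ^ r ≤ f n) : Tendsto (fun n => f n * n.choose 2) atTop atTop := by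
  have hpow : Tendsto (fun n : ℕ => c / 4 * (n : ℝ) ^ (r + 2)) atTop atTop :=
    ((tendsto_rpow_atTop (by linarith)).comp tendsto_natCast_atTop_atTop).const_mul_atTop
      (by positivity)
  refine tendsto_atTop_mono' atTop ?_ hpow
  filter_upwards [eventually_ge_atTop 2] with n hn
  have hn2 : (2 : ℝ) ≤ n := by exact_mod_cast hn
  have hchoose : (n : ℝ) ^ 2 / 4 ≤ n.choose 2 := by
    rw [Nat.cast_choose_two]
    nlinarith
  calc c / 4 * (n : ℝ) ^ (r + 2) = c * (n : ℝ) ^ r * ((n : ℝ) ^ 2 / 4) := by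
        rw [rpow_add (by linarith), rpow_two]
        ring
    _ ≤ f n * n.choose 2 := by
        gcongr
        · exact (by positivity : 0 ≤ c * (n : ℝ) ^ r).trans (h n)
        · exact h n

lemma eventually_exp_neg_add_exp_neg_lt {k : ℕ → ℝ} (hk : Tendsto k atTop atTop) {a b ε : ℝ}
    (ha : 0 < a) (hb : 0 < b) (hε : 0 < ε) :
    ∀ᶠ n in atTop, exp (-(a * k n)) + exp (-(b * k n)) < ε := by
  have hexp {c : ℝ} (hc : 0 < c) : Tendsto (fun n => exp (-(c * k n))) atTop (nhds 0) :=
    tendsto_exp_neg_atTop_nhds_zero.comp (hk.const_mul_atTop hc)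
  simpa using ((hexp ha).add (hexp hb)).eventually_lt_const (by simpa using hε)

/-- algorithm-independent converse, Theorem 1.
Fix `θ ∈ (0,1)` and `q = Θ(n^{2(θ−1)})`; let `G ~ ER(n,q)` with `k̄ = q·C(n,2)`.
For any sequence of (possibly randomized) non-adaptive test designs with `t n` tests and
any decoders, if the error probability tends to `0`, then for every `η > 0` one has
`t n ≥ (1−η)·k̄·log₂(1/q)` for all sufficiently large `n`. -/
theorem statement0
    (θ : ℝ) (hθ0 : 0 < θ) (hθ1 : θ < 1)
    (q : ℕ → ℝ) (hq01 : ∀ n, 0 ≤ q n ∧ q n ≤ 1)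
    (c₁ c₂ : ℝ) (hc₁ : 0 < c₁)
    (hq : ∀ n : ℕ, c₁ * (n : ℝ) ^ (2 * (θ - 1)) ≤ q n ∧ q n ≤ c₂ * (n : ℝ) ^ (2 * (θ - 1)))
    (t : ℕ → ℕ)
    -- a randomized non-adaptive test design: a probability distribution over test collections
    (D : (n : ℕ) → (Fin (t n) → Finset (Fin n)) → ℝ)
    (hD0 : ∀ n Ls, 0 ≤ D n Ls)
    (hD1 : ∀ n, ∑ Ls : Fin (t n) → Finset (Fin n), D n Ls = 1)
    -- a decoder: a function of the tests and their outcomes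
    (dec : (n : ℕ) → (Fin (t n) → Finset (Fin n)) → (Fin (t n) → Prop) → Finset (Sym2 (Fin n)))
    -- the error probability tends to zero
    (hpe : Tendsto (fun n => ∑ Ls : Fin (t n) → Finset (Fin n),
        D n Ls * erProb n (q n) (fun E => dec n Ls (fun i => covers E (Ls i)) ≠ E))
      atTop (nhds 0)) :
    ∀ η : ℝ, 0 < η →
      ∀ᶠ n : ℕ in atTop, (1 - η) * (kbar q n * Real.logb 2 (1 / q n)) ≤ (t n : ℝ) := by
  intro η hη
  obtain ⟨δ, hδ0, hδ1, hηδ⟩ : ∃ δ : ℝ, 0 < δ ∧ δ < 1 ∧ 2 * δ ≤ η :=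
    ⟨min η 1 / 2, half_pos (lt_min hη one_pos), by linarith [min_le_right η 1],
      by linarith [min_le_left η 1]⟩
  have hk : Tendsto (kbar q) atTop atTop :=
    tendsto_mul_choose_two_atTop hc₁ (by linarith) (fun n => (hq n).1)
  have hsmall : ∀ᶠ n in atTop, exp (-(klFun (1 - δ) * kbar q n)) +
      exp (-(δ * log 2 * kbar q n)) < 1 / 2 :=
    eventually_exp_neg_add_exp_neg_lt hk (klFun_pos (by linarith) (by linarith))
      (mul_pos hδ0 (log_pos one_lt_two)) one_half_pos
  have hq_pos : ∀ᶠ n in atTop, 0 < q n :=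
    (hk.eventually_gt_atTop 0).mono fun n h => pos_of_mul_pos_left h (Nat.cast_nonneg _)
  have hq_half : ∀ᶠ n in atTop, q n ≤ 1 / 2 :=
    (tendsto_zero_of_le_mul_rpow (by linarith) (fun n => (hq01 n).1)
      (fun n => (hq n).2)).eventually_le_const one_half_pos
  have herr : ∀ᶠ n in atTop, errorProb n (t n) (q n) (D n) (dec n) < 1 / 2 :=
    hpe.eventually_lt_const one_half_pos
  by_contra hcon
  obtain ⟨n, ht, hq0, hqh, hR, hpe_n⟩ := ((not_eventually.1 hcon).and_eventually
    (hq_pos.and (hq_half.and (hsmall.and herr)))).exists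
  have hkL : 0 ≤ kbar q n * logb 2 (1 / q n) :=
    mul_nonneg (mul_nonneg hq0.le (Nat.cast_nonneg _))
      (logb_nonneg one_lt_two (one_le_one_div hq0 (by linarith)))
  have hsucc : 1 - errorProb n (t n) (q n) (D n) (dec n) ≤
      exp (-(klFun (1 - δ) * kbar q n)) + exp (-(δ * log 2 * kbar q n)) :=
    one_sub_errorProb_le_exp_add_exp hq0 hqh hδ0 hδ1 (hD0 n) (hD1 n) (dec n)
    ((not_le.1 ht).trans_le (mul_le_mul_of_nonneg_right (by linarith) hkL)).le
  linarith

end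
end

section
/- Let G be a simple undirected graph with k edges and maximum degree d ≥ 1, and let j ≥ 1 be an integer with k ≥ (j−1)(2d−1). Then the number of ordered j-tuples (e₁,…,e_j) of edges of G that are pairwise vertex-disjoint is at least ∏_{i=0}^{j−1} (k − i·(2d−1)); consequently, the number of j-element sets of pairwise vertex-disjoint edges of G is at least (1/j!)·∏_{i=0}^{j−1} (k − i·(2d−1)), and is trivially at most C(k,j). -/
open scoped BigOperators Classical
open Finset Filter

noncomputable section

lemma sym2Disjoint_comm {n : ℕ} {e e' : Sym2 (Fin n)} (h : sym2Disjoint e e') :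
    sym2Disjoint e' e := fun v hv hv' => h v hv' hv

/-- The tuple set of length `j`. -/
def tupleSet (n : ℕ) (E : Finset (Sym2 (Fin n))) (j : ℕ) : Finset (Fin j → Sym2 (Fin n)) :=
  (Finset.univ : Finset (Fin j → Sym2 (Fin n))).filter fun f =>
    (∀ i, f i ∈ E) ∧ ∀ i i', i ≠ i' → sym2Disjoint (f i) (f i')

/-- Valid extensions of a `j`-tuple. -/
def extSet {n j : ℕ} (E : Finset (Sym2 (Fin n))) (g : Fin j → Sym2 (Fin n)) :
    Finset (Sym2 (Fin n)) :=
  E.filter fun e => ∀ i, sym2Disjoint e (g i)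

/-- The number of edges meeting a fixed edge `e₀ ∈ E` is at most `2d-1`. -/
lemma card_meets {n d : ℕ} (E : Finset (Sym2 (Fin n)))
    (hdeg : ∀ v, degOf E v ≤ d) (e₀ : Sym2 (Fin n)) (he₀ : e₀ ∈ E) :
    (E.filter fun e => ¬ sym2Disjoint e e₀).card ≤ 2 * d - 1 := by
  induction e₀ using Sym2.ind with
  | _ a b =>
    have hsub : (E.filter fun e => ¬ sym2Disjoint e s(a, b)) ⊆
        (E.filter fun e => a ∈ e) ∪ (E.filter fun e => b ∈ e) := by
      intro e he
      rw [Finset.mem_filter] at he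
      obtain ⟨heE, hnd⟩ := he
      simp only [sym2Disjoint, not_forall, Classical.not_imp, not_not] at hnd
      obtain ⟨v, hv1, hv2⟩ := hnd
      rw [Sym2.mem_iff] at hv2
      rcases hv2 with rfl | rfl
      · exact Finset.mem_union_left _ (Finset.mem_filter.2 ⟨heE, hv1⟩)
      · exact Finset.mem_union_right _ (Finset.mem_filter.2 ⟨heE, hv1⟩)
    have hinter : s(a, b) ∈ (E.filter fun e => a ∈ e) ∩ (E.filter fun e => b ∈ e) := by
      simp [Finset.mem_inter, Finset.mem_filter, he₀]
    have h1 : ((E.filter fun e => a ∈ e) ∪ (E.filter fun e => b ∈ e)).card +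
        ((E.filter fun e => a ∈ e) ∩ (E.filter fun e => b ∈ e)).card =
        (E.filter fun e => a ∈ e).card + (E.filter fun e => b ∈ e).card :=
      Finset.card_union_add_card_inter _ _
    have ha : (E.filter fun e => a ∈ e).card ≤ d := hdeg a
    have hb : (E.filter fun e => b ∈ e).card ≤ d := hdeg b
    have hpos : 1 ≤ ((E.filter fun e => a ∈ e) ∩ (E.filter fun e => b ∈ e)).card :=
      Finset.card_pos.2 ⟨_, hinter⟩
    calc (E.filter fun e => ¬ sym2Disjoint e s(a, b)).card
        ≤ ((E.filter fun e => a ∈ e) ∪ (E.filter fun e => b ∈ e)).card :=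
          Finset.card_le_card hsub
      _ ≤ 2 * d - 1 := by omega

lemma ext_lb {n k d j : ℕ} (E : Finset (Sym2 (Fin n))) (hk : E.card = k)
    (hdeg : ∀ v, degOf E v ≤ d) (g : Fin j → Sym2 (Fin n)) (hg : ∀ i, g i ∈ E) :
    k - j * (2 * d - 1) ≤ (extSet E g).card := by
  have hsplit : (extSet E g).card + (E.filter fun e => ¬ ∀ i, sym2Disjoint e (g i)).card
      = E.card := Finset.card_filter_add_card_filter_not _
  have hbad : (E.filter fun e => ¬ ∀ i, sym2Disjoint e (g i)).card ≤ j * (2 * d - 1) := by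
    have hsub : (E.filter fun e => ¬ ∀ i, sym2Disjoint e (g i)) ⊆
        Finset.univ.biUnion fun i : Fin j => E.filter fun e => ¬ sym2Disjoint e (g i) := by
      intro e he
      rw [Finset.mem_filter] at he
      obtain ⟨heE, hnd⟩ := he
      rw [not_forall] at hnd
      obtain ⟨i, hi⟩ := hnd
      exact Finset.mem_biUnion.2 ⟨i, Finset.mem_univ _, Finset.mem_filter.2 ⟨heE, hi⟩⟩
    calc (E.filter fun e => ¬ ∀ i, sym2Disjoint e (g i)).card
        ≤ ∑ i : Fin j, (E.filter fun e => ¬ sym2Disjoint e (g i)).card :=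
          le_trans (Finset.card_le_card hsub) (Finset.card_biUnion_le)
      _ ≤ ∑ _i : Fin j, (2 * d - 1) :=
          Finset.sum_le_sum fun i _ => card_meets E hdeg (g i) (hg i)
      _ = j * (2 * d - 1) := by simp [Finset.sum_const, mul_comm]
  omega

/-- `tupleSet` at `j+1` has card `∑_{g ∈ tupleSet j} |extSet g|`. -/
lemma card_tupleSet_succ {n j : ℕ} (E : Finset (Sym2 (Fin n))) :
    (tupleSet n E (j + 1)).card = ∑ g ∈ tupleSet n E j, (extSet E g).card := by
  rw [← Finset.card_sigma]
  refine Finset.card_bij' (fun f _ => (⟨Fin.init f, f (Fin.last j)⟩ :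
      Σ _g : Fin j → Sym2 (Fin n), Sym2 (Fin n)))
    (fun p _ => Fin.snoc p.1 p.2) ?hi ?hj ?li ?ri
  case li => intro f _; exact Fin.snoc_init_self f
  case ri =>
    intro p _
    obtain ⟨g, e⟩ := p
    simp [Fin.init_snoc]
  case hi =>
    intro f hf
    rw [tupleSet, Finset.mem_filter] at hf
    obtain ⟨-, hmem, hdis⟩ := hf
    rw [Finset.mem_sigma]
    constructor
    · rw [tupleSet, Finset.mem_filter]
      refine ⟨Finset.mem_univ _, fun i => hmem _, fun i i' hne => hdis _ _ ?_⟩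
      simpa using hne
    · rw [extSet, Finset.mem_filter]
      refine ⟨hmem _, fun i => hdis _ _ ?_⟩
      exact (Fin.castSucc_lt_last i).ne'
  case hj =>
    intro p hp
    rw [Finset.mem_sigma, tupleSet, Finset.mem_filter, extSet, Finset.mem_filter] at hp
    obtain ⟨⟨-, hmem, hdis⟩, heE, hedis⟩ := hp
    rw [tupleSet, Finset.mem_filter]
    refine ⟨Finset.mem_univ _, fun i => ?_, fun i i' hne => ?_⟩
    · induction i using Fin.lastCases with
      | last => simpa using heE
      | cast i => simpa using hmem i
    · induction i using Fin.lastCases with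
      | last =>
        induction i' using Fin.lastCases with
        | last => exact absurd rfl hne
        | cast i' => simpa using hedis i'
      | cast i =>
        induction i' using Fin.lastCases with
        | last => simpa using sym2Disjoint_comm (hedis i)
        | cast i' =>
          have : i ≠ i' := fun h => hne (by rw [h])
          simpa using hdis i i' this

lemma tuple_lb (n k d : ℕ) (hd : 1 ≤ d) (E : Finset (Sym2 (Fin n)))
    (hk : E.card = k) (hdeg : ∀ v, degOf E v ≤ d) :
    ∀ j : ℕ, (j - 1) * (2 * d - 1) ≤ k →
      (∏ i ∈ Finset.range j, ((k : ℝ) - (i : ℝ) * (2 * (d : ℝ) - 1))) ≤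
        ((tupleSet n E j).card : ℝ) := by
  have hcast : ∀ i : ℕ, ((i * (2 * d - 1) : ℕ) : ℝ) = (i : ℝ) * (2 * (d : ℝ) - 1) := by
    intro i
    rw [Nat.cast_mul, Nat.cast_sub (by omega : 1 ≤ 2 * d)]
    push_cast; ring
  intro j
  induction j with
  | zero =>
    intro _
    have : tupleSet n E 0 = Finset.univ := by
      apply Finset.filter_true_of_mem
      intro f _
      exact ⟨fun i => i.elim0, fun i => i.elim0⟩
    rw [this]
    simp
  | succ j ih =>
    intro hkj
    simp only [Nat.add_sub_cancel] at hkj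
    have ih' := ih (le_trans (Nat.mul_le_mul_right _ (Nat.sub_le j 1)) hkj)
    have hfac : (0 : ℝ) ≤ (k : ℝ) - (j : ℝ) * (2 * (d : ℝ) - 1) := by
      have : ((j * (2 * d - 1) : ℕ) : ℝ) ≤ (k : ℝ) := Nat.cast_le.2 hkj
      rw [hcast] at this; linarith
    rw [Finset.prod_range_succ, card_tupleSet_succ]
    have hterm : ∀ g ∈ tupleSet n E j, (k : ℝ) - (j : ℝ) * (2 * (d : ℝ) - 1) ≤
        ((extSet E g).card : ℝ) := by
      intro g hg
      rw [tupleSet, Finset.mem_filter] at hg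
      have := ext_lb E hk hdeg g hg.2.1
      have h2 : ((k - j * (2 * d - 1) : ℕ) : ℝ) ≤ ((extSet E g).card : ℝ) := Nat.cast_le.2 this
      rw [Nat.cast_sub hkj, hcast] at h2
      exact h2
    calc (∏ i ∈ Finset.range j, ((k : ℝ) - (i : ℝ) * (2 * (d : ℝ) - 1))) *
          ((k : ℝ) - (j : ℝ) * (2 * (d : ℝ) - 1))
        ≤ ((tupleSet n E j).card : ℝ) * ((k : ℝ) - (j : ℝ) * (2 * (d : ℝ) - 1)) := by
          apply mul_le_mul_of_nonneg_right ih' hfac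
      _ = (tupleSet n E j).card • ((k : ℝ) - (j : ℝ) * (2 * (d : ℝ) - 1)) := by
          rw [nsmul_eq_mul]
      _ ≤ ∑ g ∈ tupleSet n E j, ((extSet E g).card : ℝ) :=
          Finset.card_nsmul_le_sum _ _ _ hterm
      _ = ((∑ g ∈ tupleSet n E j, (extSet E g).card : ℕ) : ℝ) := by push_cast; ring

/-- counting disjoint edge tuples.
Let `G` be a simple undirected graph with `k` edges and maximum degree `d ≥ 1`, and let
`j ≥ 1` with `k ≥ (j−1)(2d−1)`.  Then the number of ordered `j`-tuples of pairwise
vertex-disjoint edges is at least `∏_{i=0}^{j−1} (k − i(2d−1))`; consequently the number of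
`j`-element sets of pairwise vertex-disjoint edges is at least
`(1/j!)·∏_{i=0}^{j−1} (k − i(2d−1))`, and is at most `C(k,j)`. -/
theorem statement7 (n k d j : ℕ) (hd : 1 ≤ d) (hj : 1 ≤ j)
    (E : Finset (Sym2 (Fin n))) (hsimple : ∀ e ∈ E, ¬ e.IsDiag)
    (hk : E.card = k) (hmax : maxDeg E = d)
    (hkj : (j - 1) * (2 * d - 1) ≤ k) :
    (∏ i ∈ Finset.range j, ((k : ℝ) - (i : ℝ) * (2 * (d : ℝ) - 1))) ≤
      (((Finset.univ : Finset (Fin j → Sym2 (Fin n))).filter fun f =>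
        (∀ i, f i ∈ E) ∧ ∀ i i', i ≠ i' → sym2Disjoint (f i) (f i')).card : ℝ) ∧
    (1 / (j.factorial : ℝ)) *
        (∏ i ∈ Finset.range j, ((k : ℝ) - (i : ℝ) * (2 * (d : ℝ) - 1))) ≤
      ((E.powerset.filter fun S => S.card = j ∧
        ∀ e ∈ S, ∀ e' ∈ S, e ≠ e' → sym2Disjoint e e').card : ℝ) ∧
    ((E.powerset.filter fun S => S.card = j ∧
        ∀ e ∈ S, ∀ e' ∈ S, e ≠ e' → sym2Disjoint e e').card : ℝ) ≤ (k.choose j : ℝ) := by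
  have hdeg : ∀ v, degOf E v ≤ d := by
    intro v; rw [← hmax]; exact Finset.le_sup (Finset.mem_univ v)
  have hT := tuple_lb n k d hd E hk hdeg j hkj
  set T : Finset (Fin j → Sym2 (Fin n)) := tupleSet n E j with hTdef
  set S : Finset (Finset (Sym2 (Fin n))) := E.powerset.filter fun S => S.card = j ∧
      ∀ e ∈ S, ∀ e' ∈ S, e ≠ e' → sym2Disjoint e e' with hSdef
  -- injectivity of tuples in T
  have hinj : ∀ f ∈ T, Function.Injective f := by
    intro f hf
    rw [hTdef, tupleSet, Finset.mem_filter] at hf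
    obtain ⟨-, hmem, hdis⟩ := hf
    intro i i' hii
    by_contra hne
    have hd' := hdis i i' hne
    have hv : (f i).out.1 ∈ f i := Sym2.out_fst_mem (f i)
    exact hd' _ hv (hii ▸ hv)
  -- the image map sends T into S
  have hmaps : ∀ f ∈ T, Finset.image f Finset.univ ∈ S := by
    intro f hf
    have hfinj := hinj f hf
    rw [hTdef, tupleSet, Finset.mem_filter] at hf
    obtain ⟨-, hmem, hdis⟩ := hf
    rw [hSdef, Finset.mem_filter, Finset.mem_powerset]
    refine ⟨fun e he => ?_, ?_, ?_⟩
    · obtain ⟨i, -, rfl⟩ := Finset.mem_image.1 he; exact hmem i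
    · rw [Finset.card_image_of_injective _ hfinj, Finset.card_univ, Fintype.card_fin]
    · intro e he e' he' hne
      obtain ⟨i, -, rfl⟩ := Finset.mem_image.1 he
      obtain ⟨i', -, rfl⟩ := Finset.mem_image.1 he'
      exact hdis i i' (fun h => hne (by rw [h]))
  -- fiber bound : card T ≤ j! * card S
  have hfiber : T.card ≤ j.factorial * S.card := by
    rw [Finset.card_eq_sum_card_fiberwise hmaps]
    have hbd : ∀ s ∈ S, (T.filter fun f => Finset.image f Finset.univ = s).card
        ≤ j.factorial := by
      intro s hs
      have hscard : s.card = j := by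
        rw [hSdef, Finset.mem_filter] at hs; exact hs.2.1
      have : (T.filter fun f => Finset.image f Finset.univ = s).card
          ≤ (Finset.univ : Finset (Fin j ↪ {x // x ∈ s})).card := by
        apply Finset.card_le_card_of_surjOn
          (fun (g : Fin j ↪ {x // x ∈ s}) => fun i => ((g i : {x // x ∈ s}) : Sym2 (Fin n)))
        intro f hf
        simp only [Finset.coe_filter, Set.mem_setOf_eq] at hf
        obtain ⟨hfT, hfs⟩ := hf
        have hfinj := hinj f hfT
        have hmem : ∀ i, f i ∈ s := by
          intro i; rw [← hfs]; exact Finset.mem_image_of_mem f (Finset.mem_univ i)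
        refine ⟨⟨fun i => ⟨f i, hmem i⟩, fun i i' h => hfinj (by
          simpa using congrArg Subtype.val h)⟩, by simp, rfl⟩
      calc (T.filter fun f => Finset.image f Finset.univ = s).card
          ≤ (Finset.univ : Finset (Fin j ↪ {x // x ∈ s})).card := this
        _ = j.factorial := by
            rw [Finset.card_univ, Fintype.card_embedding_eq, Fintype.card_fin,
              Fintype.card_coe, hscard, Nat.descFactorial_self]
    calc ∑ s ∈ S, (T.filter fun f => Finset.image f Finset.univ = s).card
        ≤ ∑ _s ∈ S, j.factorial := Finset.sum_le_sum hbd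
      _ = j.factorial * S.card := by rw [Finset.sum_const, smul_eq_mul, mul_comm]
  have hfacpos : (0 : ℝ) < (j.factorial : ℝ) := by positivity
  have h1 : (∏ i ∈ Finset.range j, ((k : ℝ) - (i : ℝ) * (2 * (d : ℝ) - 1))) ≤ (T.card : ℝ) :=
    hT
  refine ⟨h1, ?_, ?_⟩
  · rw [div_mul_eq_mul_div, one_mul, div_le_iff₀ hfacpos]
    calc (∏ i ∈ Finset.range j, ((k : ℝ) - (i : ℝ) * (2 * (d : ℝ) - 1)))
        ≤ (T.card : ℝ) := h1
      _ ≤ ((j.factorial * S.card : ℕ) : ℝ) := Nat.cast_le.2 hfiber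
      _ = (S.card : ℝ) * (j.factorial : ℝ) := by push_cast; ring
  · have hsub : S ⊆ E.powersetCard j := by
      intro s hs
      rw [hSdef, Finset.mem_filter, Finset.mem_powerset] at hs
      exact Finset.mem_powersetCard.2 ⟨hs.1, hs.2.1⟩
    calc (S.card : ℝ) ≤ ((E.powersetCard j).card : ℝ) := Nat.cast_le.2 (Finset.card_le_card hsub)
      _ = (k.choose j : ℝ) := by rw [Finset.card_powersetCard, hk]

end
end

section
/- Let G be a simple undirected graph on {1,…,n} with k ≥ 1 edges and maximum degree d, and let a Bernoulli(p) test include each node independently with probability p ∈ (0,1). Then kp⁴/(p² + 2dp³ + kp⁴) ≤ P_G[Y=1] ≤ kp². -/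
open scoped BigOperators Classical
open Finset Filter

noncomputable section

/-! The number `X` of edges covered by the test satisfies `E[X] = kp²` and, since two distinct
edges span at least three nodes and at most `2d` edges meet a given one,
`E[X²] ≤ k (p² + 2dp³ + kp⁴)`. Markov's inequality gives `P[X ≥ 1] ≤ E[X]`, and the second moment
method (Cauchy–Schwarz) gives `P[X > 0] ≥ E[X]² / E[X²]`. -/

def bernExp (n : ℕ) (p : ℝ) (X : Finset (Fin n) → ℝ) : ℝ :=
  ∑ L : Finset (Fin n), testWeight n p L * X L

section BernoulliTest

variable {n : ℕ} {p : ℝ}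

lemma testWeight_nonneg (hp0 : 0 ≤ p) (hp1 : p ≤ 1) (L : Finset (Fin n)) :
    0 ≤ testWeight n p L :=
  mul_nonneg (pow_nonneg hp0 _) (pow_nonneg (sub_nonneg.2 hp1) _)

lemma bernProb_nonneg (hp0 : 0 ≤ p) (hp1 : p ≤ 1) (A : Finset (Fin n) → Prop) :
    0 ≤ bernProb n p A :=
  sum_nonneg fun L _ => by
    split_ifs
    exacts [testWeight_nonneg hp0 hp1 L, le_rfl]

lemma bernProb_subset (S : Finset (Fin n)) : bernProb n p (S ⊆ ·) = p ^ #S := by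
  -- Expanding `∏ v, (p + [v ∉ S] (1 - p))` over the subsets `L`, the term of `L` is its weight
  -- if `S ⊆ L` and `0` otherwise.
  have hterm : ∀ L : Finset (Fin n),
      (∏ _v ∈ L, p) * ∏ v ∈ univ \ L, (if v ∈ S then 0 else 1 - p)
        = if S ⊆ L then testWeight n p L else 0 := by
    intro L
    by_cases hSL : S ⊆ L
    · rw [if_pos hSL, prod_congr rfl fun v hv => if_neg fun hvS => (mem_sdiff.1 hv).2 (hSL hvS),
        prod_const, prod_const, card_univ_sdiff, Fintype.card_fin, testWeight]
    · obtain ⟨v, hvS, hvL⟩ := not_subset.1 hSL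
      rw [if_neg hSL, prod_eq_zero (mem_sdiff.2 ⟨mem_univ v, hvL⟩) (by simp [hvS]), mul_zero]
  calc bernProb n p (S ⊆ ·) = ∏ v : Fin n, (p + if v ∈ S then 0 else 1 - p) := by
        rw [prod_add, powerset_univ]
        exact sum_congr rfl fun L _ => by convert (hterm L).symm
    _ = ∏ v : Fin n, if v ∈ S then p else 1 :=
        prod_congr rfl fun v _ => by split_ifs <;> ring
    _ = p ^ #S := by rw [prod_ite_mem, univ_inter, prod_const]

lemma bernExp_sum_ite {ι : Type*} (s : Finset ι) (A : ι → Finset (Fin n) → Prop)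
    [∀ i L, Decidable (A i L)] :
    bernExp n p (fun L => ∑ i ∈ s, if A i L then (1 : ℝ) else 0) = ∑ i ∈ s, bernProb n p (A i) := by
  simp only [bernExp, bernProb, mul_sum, mul_ite, mul_one, mul_zero]
  rw [sum_comm]
  congr!

lemma bernProb_le_bernExp (hp0 : 0 ≤ p) (hp1 : p ≤ 1) {A : Finset (Fin n) → Prop}
    {X : Finset (Fin n) → ℝ} (hX : ∀ L, 0 ≤ X L) (hAX : ∀ L, A L → 1 ≤ X L) :
    bernProb n p A ≤ bernExp n p X :=
  sum_le_sum fun L _ => by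
    split_ifs with hA
    · exact le_mul_of_one_le_right (testWeight_nonneg hp0 hp1 L) (hAX L hA)
    · exact mul_nonneg (testWeight_nonneg hp0 hp1 L) (hX L)

lemma sq_bernExp_le_bernProb_mul_bernExp_sq (hp0 : 0 ≤ p) (hp1 : p ≤ 1)
    {A : Finset (Fin n) → Prop} {X : Finset (Fin n) → ℝ} (hAX : ∀ L, ¬ A L → X L = 0) :
    bernExp n p X ^ 2 ≤ bernProb n p A * bernExp n p (fun L => X L ^ 2) := by
  refine sum_sq_le_sum_mul_sum_of_sq_le_mul _ (fun L _ => ?_) (fun L _ => ?_) (fun L _ => ?_)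
  · split_ifs
    exacts [testWeight_nonneg hp0 hp1 L, le_rfl]
  · exact mul_nonneg (testWeight_nonneg hp0 hp1 L) (sq_nonneg _)
  · by_cases hA : A L
    · rw [if_pos hA]
      exact le_of_eq (by ring)
    · simp [hAX L hA]

end BernoulliTest

section CoveredEdges

variable {n : ℕ} {p : ℝ}

lemma pairIn_iff_toFinset_subset {e : Sym2 (Fin n)} {L : Finset (Fin n)} :
    pairIn e L ↔ e.toFinset ⊆ L := by
  simp [pairIn, subset_iff]

lemma Sym2.toFinset_injective {α : Type*} [DecidableEq α] :
    Function.Injective (Sym2.toFinset : Sym2 α → Finset α) := fun e e' h =>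
  Sym2.ext fun v => by rw [← Sym2.mem_toFinset, h, Sym2.mem_toFinset]

def coveredCount (E : Finset (Sym2 (Fin n))) (L : Finset (Fin n)) : ℕ :=
  #{e ∈ E | pairIn e L}

lemma coveredCount_pos_iff {E : Finset (Sym2 (Fin n))} {L : Finset (Fin n)} :
    0 < coveredCount E L ↔ covers E L := by
  simp [coveredCount, covers, card_pos, Finset.Nonempty]

lemma cast_coveredCount_sq (E : Finset (Sym2 (Fin n))) (L : Finset (Fin n)) :
    (coveredCount E L : ℝ) ^ 2
      = ∑ x ∈ E ×ˢ E, if pairIn x.1 L ∧ pairIn x.2 L then 1 else 0 := by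
  rw [coveredCount, natCast_card_filter, sq, sum_mul_sum, sum_product]
  simp only [ite_zero_mul_ite_zero, mul_one]

lemma bernExp_coveredCount {E : Finset (Sym2 (Fin n))} (hE : ∀ e ∈ E, ¬ e.IsDiag) :
    bernExp n p (fun L => coveredCount E L) = #E * p ^ 2 := by
  rw [show (fun L => (coveredCount E L : ℝ)) = fun L => ∑ e ∈ E, if pairIn e L then 1 else 0
    from funext fun L => natCast_card_filter _ _, bernExp_sum_ite, ← nsmul_eq_mul, ← sum_const]
  refine sum_congr rfl fun e he => ?_
  rw [show pairIn e = (e.toFinset ⊆ ·) from funext fun L => propext pairIn_iff_toFinset_subset,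
    bernProb_subset, Sym2.card_toFinset_of_not_isDiag e (hE e he)]

lemma bernExp_coveredCount_sq (E : Finset (Sym2 (Fin n))) :
    bernExp n p (fun L => (coveredCount E L : ℝ) ^ 2)
      = ∑ e ∈ E, ∑ e' ∈ E, p ^ #(e.toFinset ∪ e'.toFinset) := by
  rw [show (fun L => (coveredCount E L : ℝ) ^ 2) = _ from funext (cast_coveredCount_sq E),
    bernExp_sum_ite, sum_product]
  simp only [pairIn_iff_toFinset_subset, ← union_subset_iff, bernProb_subset]

lemma card_filter_not_disjoint_le (E : Finset (Sym2 (Fin n))) (e : Sym2 (Fin n)) :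
    #{e' ∈ E | ¬ Disjoint e.toFinset e'.toFinset} ≤ 2 * maxDeg E := by
  have hsub : {e' ∈ E | ¬ Disjoint e.toFinset e'.toFinset}
      ⊆ e.toFinset.biUnion fun v => {e' ∈ E | v ∈ e'} := by
    intro e' he'
    obtain ⟨he'E, hmeet⟩ := mem_filter.1 he'
    obtain ⟨v, hv, hv'⟩ := not_disjoint_iff.1 hmeet
    exact mem_biUnion.2 ⟨v, hv, mem_filter.2 ⟨he'E, Sym2.mem_toFinset.1 hv'⟩⟩
  calc #{e' ∈ E | ¬ Disjoint e.toFinset e'.toFinset}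
      ≤ ∑ v ∈ e.toFinset, degOf E v := (card_le_card hsub).trans card_biUnion_le
    _ ≤ #e.toFinset * maxDeg E := sum_le_card_nsmul _ _ _ fun v _ => le_sup (mem_univ v)
    _ ≤ 2 * maxDeg E := by
        gcongr
        rw [Sym2.card_toFinset]
        split_ifs <;> omega

lemma pow_card_toFinset_union_le {α : Type*} [DecidableEq α] (hp0 : 0 ≤ p) (hp1 : p ≤ 1)
    {e e' : Sym2 α} (he : ¬ e.IsDiag) (he' : ¬ e'.IsDiag) :
    p ^ #(e.toFinset ∪ e'.toFinset)
      ≤ (if e' = e then p ^ 2 else 0)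
        + (if ¬ Disjoint e.toFinset e'.toFinset then p ^ 3 else 0) + p ^ 4 := by
  have hcard := Sym2.card_toFinset_of_not_isDiag e he
  have hcard' := Sym2.card_toFinset_of_not_isDiag e' he'
  by_cases heq : e' = e
  · subst heq
    rw [union_self, hcard, if_pos rfl]
    have : 0 ≤ (if ¬ Disjoint e'.toFinset e'.toFinset then p ^ 3 else 0) := by positivity
    linarith [pow_nonneg hp0 4]
  rw [if_neg heq, zero_add]
  by_cases hdisj : Disjoint e.toFinset e'.toFinset
  · rw [card_union_of_disjoint hdisj, hcard, hcard', if_neg (not_not.2 hdisj), zero_add]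
  · have h3 : 3 ≤ #(e.toFinset ∪ e'.toFinset) := by
      by_contra! hlt
      exact heq <| Sym2.toFinset_injective <|
        (eq_of_subset_of_card_le subset_union_right (by omega)).trans
          (eq_of_subset_of_card_le subset_union_left (by omega)).symm
    rw [if_pos hdisj]
    linarith [pow_le_pow_of_le_one hp0 hp1 h3, pow_nonneg hp0 4]

lemma sum_pow_card_toFinset_union_le (hp0 : 0 ≤ p) (hp1 : p ≤ 1)
    {E : Finset (Sym2 (Fin n))} (hE : ∀ e ∈ E, ¬ e.IsDiag) {e : Sym2 (Fin n)} (he : e ∈ E) :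
    ∑ e' ∈ E, p ^ #(e.toFinset ∪ e'.toFinset) ≤ p ^ 2 + 2 * maxDeg E * p ^ 3 + #E * p ^ 4 :=
  calc ∑ e' ∈ E, p ^ #(e.toFinset ∪ e'.toFinset)
      ≤ ∑ e' ∈ E, ((if e' = e then p ^ 2 else 0)
          + (if ¬ Disjoint e.toFinset e'.toFinset then p ^ 3 else 0) + p ^ 4) :=
        sum_le_sum fun e' he' => pow_card_toFinset_union_le hp0 hp1 (hE e he) (hE e' he')
    _ = p ^ 2 + #{e' ∈ E | ¬ Disjoint e.toFinset e'.toFinset} * p ^ 3 + #E * p ^ 4 := by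
        rw [sum_add_distrib, sum_add_distrib, sum_ite_eq', if_pos he, sum_ite, sum_const_zero,
          add_zero, sum_const, sum_const, nsmul_eq_mul, nsmul_eq_mul]
    _ ≤ p ^ 2 + 2 * maxDeg E * p ^ 3 + #E * p ^ 4 := by
        gcongr
        exact_mod_cast card_filter_not_disjoint_le E e

end CoveredEdges

/-- bounds on the probability of a positive test.
Let `G` be a simple undirected graph on `{1,…,n}` with `k ≥ 1` edges and maximum degree `d`,
and let a Bernoulli(p) test include each node independently with probability `p ∈ (0,1)`.
Then `kp⁴/(p² + 2dp³ + kp⁴) ≤ P_G[Y=1] ≤ kp²`. -/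
theorem statement8 (n k d : ℕ) (p : ℝ) (hp0 : 0 < p) (hp1 : p < 1)
    (E : Finset (Sym2 (Fin n))) (hsimple : ∀ e ∈ E, ¬ e.IsDiag)
    (hk : E.card = k) (hk1 : 1 ≤ k) (hmax : maxDeg E = d) :
    (k : ℝ) * p ^ 4 / (p ^ 2 + 2 * d * p ^ 3 + k * p ^ 4) ≤ bernProb n p (covers E) ∧
    bernProb n p (covers E) ≤ (k : ℝ) * p ^ 2 := by
  set X : Finset (Fin n) → ℝ := fun L => coveredCount E L
  have hmean : bernExp n p X = k * p ^ 2 := by rw [bernExp_coveredCount hsimple, hk]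
  have hsecond : bernExp n p (fun L => X L ^ 2) ≤ k * (p ^ 2 + 2 * d * p ^ 3 + k * p ^ 4) := by
    rw [bernExp_coveredCount_sq, ← hk, ← hmax, ← nsmul_eq_mul, ← sum_const]
    exact sum_le_sum fun e he => sum_pow_card_toFinset_union_le hp0.le hp1.le hsimple he
  refine ⟨?_, ?_⟩
  · have hsq := sq_bernExp_le_bernProb_mul_bernExp_sq (A := covers E) (X := X) hp0.le hp1.le
      fun L hL => by simpa [X] using mt coveredCount_pos_iff.1 hL
    have hk0 : (0 : ℝ) < k := by exact_mod_cast hk1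
    rw [div_le_iff₀ (by positivity)]
    refine le_of_mul_le_mul_left ?_ hk0
    calc (k : ℝ) * (k * p ^ 4) = bernExp n p X ^ 2 := by rw [hmean]; ring
      _ ≤ bernProb n p (covers E) * bernExp n p (fun L => X L ^ 2) := hsq
      _ ≤ bernProb n p (covers E) * (k * (p ^ 2 + 2 * d * p ^ 3 + k * p ^ 4)) :=
        mul_le_mul_of_nonneg_left hsecond (bernProb_nonneg hp0.le hp1.le _)
      _ = k * (bernProb n p (covers E) * (p ^ 2 + 2 * d * p ^ 3 + k * p ^ 4)) := by ring
  · rw [← hmean]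
    exact bernProb_le_bernExp hp0.le hp1.le (fun L => Nat.cast_nonneg _)
      fun L hL => Nat.one_le_cast.2 (coveredCount_pos_iff.2 hL)

end
end

section
/- Let G = (V,E) be a graph on {1,…,n} with k ≥ 1 edges and maximum degree d, and perform t i.i.d. Bernoulli(p) tests. Write P₁ = P_G[Y=1], ξ = (1+2d)p², ξ′ = 2dp, and assume p²·(1 − P₁ + ξ) ≤ 1. Then the probability that at least one edge of E is masked (i.e., every test containing both its endpoints also covers some other edge of E) is at least k·(1 − p²(1 − P₁ + ξ))^{2t} / ( (1 − p²(1 − P₁ − ξ′))^{t} + k·max(0, 1 − 2p²(1 − P₁ − ξ′))^{t} ). -/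
open scoped BigOperators Classical
open Finset Filter

noncomputable section

/-!
Call a test `L` *revealing* for an edge `e` if `e` is the only edge of `E` it covers
(`coversOnly E e L`). An edge is masked iff none of the `t` tests reveals it, so it is masked
with probability `(1 - q_e)^t`, where `q_e` is the probability that one test reveals `e`; two
distinct edges cannot be revealed by the same test, so both are masked with probability
`(1 - q_e - q_e')^t`. Conditioning on the endpoints `a, b` of `e`, `q_e = p² · P(L ∪ {a, b}
covers no edge but e)`, which lies between `p²(1 - P₁ - 2dp)` (if `L` covers nothing, a second
edge in `L ∪ {a, b}` needs a neighbour of `a` or `b` in `L`) and `p²(1 - P₁ + p²)`. The bound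
then follows from the Chung–Erdős inequality
`P(⋃ Aₑ) ≥ (∑ P(Aₑ))² / ∑_{e,e'} P(Aₑ ∩ Aₑ')`.
-/
section EventMass

variable {α ι : Type*} [Fintype α]

def eventMass (W : α → ℝ) (A : α → Prop) : ℝ :=
  ∑ x, if A x then W x else 0

variable {W : α → ℝ}

lemma eventMass_nonneg (hW : ∀ x, 0 ≤ W x) (A : α → Prop) : 0 ≤ eventMass W A :=
  Finset.sum_nonneg fun x _ => ite_nonneg (hW x) le_rfl

lemma eventMass_mono (hW : ∀ x, 0 ≤ W x) {A B : α → Prop} (h : ∀ x, A x → B x) :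
    eventMass W A ≤ eventMass W B :=
  Finset.sum_le_sum fun x _ => by
    by_cases hA : A x
    · simp [hA, h x hA]
    · simpa [hA] using ite_nonneg (hW x) le_rfl

lemma eventMass_add_eventMass_not (A : α → Prop) :
    eventMass W A + eventMass W (fun x => ¬ A x) = ∑ x, W x := by
  rw [eventMass, eventMass, ← Finset.sum_add_distrib]
  exact Finset.sum_congr rfl fun x _ => by by_cases h : A x <;> simp [h]

lemma eventMass_or_of_disjoint {A B : α → Prop} (h : ∀ x, ¬ (A x ∧ B x)) :
    eventMass W (fun x => A x ∨ B x) = eventMass W A + eventMass W B := by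
  rw [eventMass, eventMass, eventMass, ← Finset.sum_add_distrib]
  refine Finset.sum_congr rfl fun x _ => ?_
  by_cases hA : A x
  · have hB : ¬ B x := fun hB => h x ⟨hA, hB⟩
    simp [hA, hB]
  · simp [hA]

lemma eventMass_or_le (hW : ∀ x, 0 ≤ W x) (A B : α → Prop) :
    eventMass W (fun x => A x ∨ B x) ≤ eventMass W A + eventMass W B := by
  calc eventMass W (fun x => A x ∨ B x)
      = eventMass W A + eventMass W (fun x => ¬ A x ∧ B x) :=
        (congrArg _ (funext fun x => propext (by tauto))).trans
          (eventMass_or_of_disjoint fun x => by tauto)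
    _ ≤ eventMass W A + eventMass W B := by
        gcongr
        exact eventMass_mono hW fun x => And.right

lemma eventMass_exists_le (hW : ∀ x, 0 ≤ W x) (s : Finset ι) (A : ι → α → Prop) :
    eventMass W (fun x => ∃ i ∈ s, A i x) ≤ ∑ i ∈ s, eventMass W (A i) := by
  simp only [eventMass]
  rw [Finset.sum_comm]
  refine Finset.sum_le_sum fun x _ => ?_
  split_ifs with h
  · obtain ⟨i, hi, hAi⟩ := h
    refine le_trans ?_ (Finset.single_le_sum (f := fun i => if A i x then W x else 0)
      (fun j _ => ite_nonneg (hW x) le_rfl) hi)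
    simp [hAi]
  · exact Finset.sum_nonneg fun j _ => ite_nonneg (hW x) le_rfl

lemma eventMass_pi_forall (t : ℕ) (A : α → Prop) :
    eventMass (fun xs : Fin t → α => ∏ i, W (xs i)) (fun xs => ∀ i, A (xs i))
      = eventMass W A ^ t := by
  simp only [eventMass]
  rw [Fintype.sum_pow]
  refine Finset.sum_congr rfl fun xs _ => ?_
  rw [Fintype.prod_ite_zero]
  congr

/-- The Chung–Erdős inequality. -/
lemma sq_sum_eventMass_le (hW : ∀ x, 0 ≤ W x) (s : Finset ι) (A : ι → α → Prop) :
    (∑ i ∈ s, eventMass W (A i)) ^ 2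
      ≤ eventMass W (fun x => ∃ i ∈ s, A i x)
        * ∑ i ∈ s, ∑ j ∈ s, eventMass W (fun x => A i x ∧ A j x) := by
  set c : α → ℝ := fun x => ∑ i ∈ s, if A i x then 1 else 0
  have hfirst : ∑ i ∈ s, eventMass W (A i) = ∑ x, c x * W x := by
    simp only [eventMass, c, Finset.sum_mul, ite_mul, one_mul, zero_mul]
    exact Finset.sum_comm
  have hsecond : ∑ i ∈ s, ∑ j ∈ s, eventMass W (fun x => A i x ∧ A j x)
      = ∑ x, c x ^ 2 * W x := by
    simp only [eventMass]
    rw [Finset.sum_congr rfl fun i _ => Finset.sum_comm, Finset.sum_comm]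
    refine Finset.sum_congr rfl fun x _ => ?_
    rw [sq, Finset.sum_mul_sum]
    simp only [Finset.sum_mul]
    refine Finset.sum_congr rfl fun i _ => Finset.sum_congr rfl fun j _ => ?_
    by_cases hi : A i x <;> by_cases hj : A j x <;> simp [hi, hj]
  have hc : ∀ x, ¬ (∃ i ∈ s, A i x) → c x = 0 := fun x h =>
    Finset.sum_eq_zero fun i hi => if_neg fun hA => h ⟨i, hi, hA⟩
  rw [hfirst, hsecond, eventMass]
  refine Finset.sum_sq_le_sum_mul_sum_of_sq_le_mul _
    (fun x _ => by split_ifs <;> simp [hW x]) (fun x _ => by positivity [hW x]) fun x _ => ?_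
  split_ifs with h
  · exact le_of_eq (by ring)
  · simp [hc x h]

lemma card_mul_sq_div_le_eventMass_exists (hW : ∀ x, 0 ≤ W x) {s : Finset ι}
    {A : ι → α → Prop} {a b c : ℝ} (ha : 0 ≤ a) (hc : 0 ≤ c)
    (hlow : ∀ i ∈ s, a ≤ eventMass W (A i)) (hdiag : ∀ i ∈ s, eventMass W (A i) ≤ b)
    (hoff : ∀ i ∈ s, ∀ j ∈ s, i ≠ j → eventMass W (fun x => A i x ∧ A j x) ≤ c) :
    #s * a ^ 2 / (b + #s * c) ≤ eventMass W (fun x => ∃ i ∈ s, A i x) := by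
  set P := eventMass W (fun x => ∃ i ∈ s, A i x)
  have hP : 0 ≤ P := eventMass_nonneg hW _
  have hnum : #s * a ≤ ∑ i ∈ s, eventMass W (A i) := by
    simpa using Finset.card_nsmul_le_sum s _ a hlow
  have hrow : ∀ i ∈ s, ∑ j ∈ s, eventMass W (fun x => A i x ∧ A j x) ≤ b + #s * c := by
    intro i hi
    rw [← Finset.add_sum_erase s _ hi]
    have hrest : ∑ j ∈ s.erase i, eventMass W (fun x => A i x ∧ A j x) ≤ #s * c :=
      calc _ ≤ #(s.erase i) * c := by
            simpa using Finset.sum_le_card_nsmul _ _ c fun j hj =>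
              hoff i hi j (Finset.mem_of_mem_erase hj) (Finset.ne_of_mem_erase hj).symm
        _ ≤ #s * c := by gcongr; exact Finset.erase_subset i s
    simp only [and_self]
    linarith [hdiag i hi]
  have hden : ∑ i ∈ s, ∑ j ∈ s, eventMass W (fun x => A i x ∧ A j x)
      ≤ #s * (b + #s * c) := by
    simpa only [nsmul_eq_mul] using Finset.sum_le_card_nsmul s _ _ hrow
  have hkey : (#s : ℝ) * (#s * a ^ 2) ≤ #s * (P * (b + #s * c)) :=
    calc (#s : ℝ) * (#s * a ^ 2) = (#s * a) ^ 2 := by ring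
      _ ≤ (∑ i ∈ s, eventMass W (A i)) ^ 2 := by gcongr
      _ ≤ P * ∑ i ∈ s, ∑ j ∈ s, eventMass W (fun x => A i x ∧ A j x) :=
          sq_sum_eventMass_le hW s A
      _ ≤ P * (#s * (b + #s * c)) := by gcongr
      _ = #s * (P * (b + #s * c)) := by ring
  rcases le_or_gt (b + #s * c) 0 with hD | hD
  · exact (div_nonpos_of_nonneg_of_nonpos (by positivity) hD).trans hP
  rw [div_le_iff₀ hD]
  rcases (Nat.cast_nonneg #s : (0 : ℝ) ≤ #s).eq_or_lt with hs | hs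
  · rw [← hs] at hD ⊢
    simpa using mul_nonneg hP hD.le
  · exact le_of_mul_le_mul_left hkey hs

end EventMass

section Bernoulli

variable {n : ℕ} {p : ℝ}

lemma testsWeight_nonneg {t : ℕ} (hp0 : 0 ≤ p) (hp1 : p ≤ 1) (Ls : Fin t → Finset (Fin n)) :
    0 ≤ testsWeight n t p Ls :=
  Finset.prod_nonneg fun i _ => testWeight_nonneg hp0 hp1 (Ls i)

lemma sum_testWeight (n : ℕ) (p : ℝ) : ∑ L : Finset (Fin n), testWeight n p L = 1 := by
  simp [testWeight, Fin.sum_pow_mul_eq_add_pow]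

lemma bernProb_true : bernProb n p (fun _ => True) = 1 := by
  simp [bernProb, sum_testWeight]

lemma bernProb_not (A : Finset (Fin n) → Prop) :
    bernProb n p (fun L => ¬ A L) = 1 - bernProb n p A := by
  have h := eventMass_add_eventMass_not (W := testWeight n p) A
  rw [sum_testWeight] at h
  exact eq_sub_of_add_eq' h

lemma testWeight_insert {a : Fin n} {L : Finset (Fin n)} (ha : a ∉ L) :
    (1 - p) * testWeight n p (insert a L) = p * testWeight n p L := by
  have hlt : #L < n := by simpa using Finset.card_lt_univ_of_notMem ha
  obtain ⟨m, hm⟩ : ∃ m, n - #L = m + 1 := ⟨n - #L - 1, by omega⟩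
  rw [testWeight, testWeight, card_insert_of_notMem ha, hm, show n - (#L + 1) = m by omega]
  ring

lemma bernProb_mem_and {a : Fin n} {D : Finset (Fin n) → Prop}
    (hD : ∀ L, D (insert a L) ↔ D L) :
    bernProb n p (fun L => a ∈ L ∧ D L) = p * bernProb n p D := by
  have ha : a ∉ univ.erase a := notMem_erase a _
  have huniv : (univ : Finset (Finset (Fin n))) = (insert a (univ.erase a)).powerset := by
    rw [insert_erase (mem_univ a), powerset_univ]
  simp only [bernProb]
  -- pair each `L ∌ a` with `insert a L`
  rw [huniv, sum_powerset_insert ha, sum_powerset_insert ha, ← sum_add_distrib,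
    ← sum_add_distrib, mul_sum]
  refine sum_congr rfl fun L hL => ?_
  have haL : a ∉ L := fun h => ha (mem_powerset.1 hL h)
  by_cases hDL : D L
  · simp only [haL, mem_insert_self, (hD L).2 hDL, hDL, false_and, true_and, if_true, if_false]
    linear_combination testWeight_insert (p := p) haL
  · simp [haL, hDL, hD L]

lemma bernProb_mem_and_mem_and {a b : Fin n} (hab : a ≠ b) {D : Finset (Fin n) → Prop}
    (hDa : ∀ L, D (insert a L) ↔ D L) (hDb : ∀ L, D (insert b L) ↔ D L) :
    bernProb n p (fun L => a ∈ L ∧ b ∈ L ∧ D L) = p ^ 2 * bernProb n p D := by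
  rw [bernProb_mem_and (D := fun L => b ∈ L ∧ D L) fun L => by simp [hab.symm, hDa],
    bernProb_mem_and hDb]
  ring

lemma bernProb_mem (a : Fin n) : bernProb n p (fun L => a ∈ L) = p := by
  simpa [bernProb_true] using bernProb_mem_and (p := p) (a := a) (D := fun _ => True) (by simp)

lemma bernProb_mem_and_mem {a b : Fin n} (hab : a ≠ b) :
    bernProb n p (fun L => a ∈ L ∧ b ∈ L) = p ^ 2 := by
  simpa [bernProb_true] using
    bernProb_mem_and_mem_and (p := p) hab (D := fun _ => True) (by simp) (by simp)

lemma bernTestsProb_forall (t : ℕ) (A : Finset (Fin n) → Prop) :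
    bernTestsProb n t p (fun Ls => ∀ i, A (Ls i)) = bernProb n p A ^ t :=
  eventMass_pi_forall t A

end Bernoulli

section Masking

variable {n : ℕ} {p : ℝ} {E : Finset (Sym2 (Fin n))}

def coversOnly (E : Finset (Sym2 (Fin n))) (e : Sym2 (Fin n)) (L : Finset (Fin n)) : Prop :=
  pairIn e L ∧ ∀ e' ∈ E, pairIn e' L → e' = e

lemma pairIn_mk {a b : Fin n} {L : Finset (Fin n)} : pairIn s(a, b) L ↔ a ∈ L ∧ b ∈ L := by
  simp [pairIn]

lemma masked_iff {e : Sym2 (Fin n)} {L : Finset (Fin n)} :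
    (pairIn e L → ∃ e' ∈ E, e' ≠ e ∧ pairIn e' L) ↔ ¬ coversOnly E e L := by
  simp only [coversOnly, not_and, not_forall]
  tauto

lemma card_adj_le_maxDeg (E : Finset (Sym2 (Fin n))) (v : Fin n) :
    #{x | s(v, x) ∈ E} ≤ maxDeg E := by
  refine (card_le_card_of_injOn (fun x => s(v, x)) (fun x hx => ?_)
    (fun x _ y _ h => Sym2.congr_right.1 h)).trans (le_sup (f := degOf E) (mem_univ v))
  simp only [coe_filter, mem_univ, true_and, Set.mem_ofPred_eq] at hx
  simp [hx]

lemma coversOnly_mk_iff {a b : Fin n} {L : Finset (Fin n)} :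
    coversOnly E s(a, b) L ↔ a ∈ L ∧ b ∈ L ∧ coversOnly E s(a, b) (insert a (insert b L)) := by
  constructor
  · intro hL
    obtain ⟨ha, hb⟩ := pairIn_mk.1 hL.1
    rw [insert_eq_of_mem hb, insert_eq_of_mem ha]
    exact ⟨ha, hb, hL⟩
  · rintro ⟨ha, hb, hL⟩
    rwa [insert_eq_of_mem hb, insert_eq_of_mem ha] at hL

lemma bernProb_coversOnly_mk {a b : Fin n} (hab : a ≠ b) :
    bernProb n p (coversOnly E s(a, b))
      = p ^ 2 * bernProb n p (fun L => coversOnly E s(a, b) (insert a (insert b L))) := by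
  refine (congrArg _ (funext fun L => propext coversOnly_mk_iff)).trans
    (bernProb_mem_and_mem_and hab (fun L => ?_) (fun L => ?_))
  · rw [insert_comm b a, insert_idem, insert_comm]
  · rw [insert_idem]

lemma bernProb_coversOnly_le (hp0 : 0 ≤ p) (hp1 : p ≤ 1) {e : Sym2 (Fin n)}
    (he : ¬ e.IsDiag) :
    bernProb n p (coversOnly E e) ≤ p ^ 2 * (1 - bernProb n p (covers E) + p ^ 2) := by
  induction e using Sym2.ind with
  | _ a b =>
  have hab : a ≠ b := fun h => he (Sym2.mk_isDiag_iff.2 h)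
  have hsplit : ∀ L, coversOnly E s(a, b) (insert a (insert b L)) →
      ¬ covers E L ∨ (a ∈ L ∧ b ∈ L) := by
    rintro L ⟨-, honly⟩
    refine or_iff_not_imp_left.2 fun hcov => ?_
    obtain ⟨f, hf, hfL⟩ := not_not.1 hcov
    have hfe := honly f hf fun v hv => mem_insert_of_mem (mem_insert_of_mem (hfL v hv))
    exact pairIn_mk.1 (hfe ▸ hfL)
  rw [bernProb_coversOnly_mk hab]
  gcongr
  calc _ ≤ bernProb n p (fun L => ¬ covers E L) + bernProb n p (fun L => a ∈ L ∧ b ∈ L) :=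
        (eventMass_mono (testWeight_nonneg hp0 hp1) hsplit).trans
          (eventMass_or_le (testWeight_nonneg hp0 hp1) _ _)
    _ = _ := by rw [bernProb_not, bernProb_mem_and_mem hab]

lemma exists_adj_mem_of_not_covers (hsimple : ∀ e ∈ E, ¬ e.IsDiag) {a b : Fin n}
    {L : Finset (Fin n)} (hL : ¬ covers E L)
    (hD : ¬ coversOnly E s(a, b) (insert a (insert b L))) :
    ∃ x ∈ L, s(a, x) ∈ E ∨ s(b, x) ∈ E := by
  simp only [coversOnly, not_and, not_forall] at hD
  obtain ⟨f, hf, hfL, hfe⟩ :=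
    hD (pairIn_mk.2 ⟨mem_insert_self _ _, mem_insert_of_mem (mem_insert_self _ _)⟩)
  induction f using Sym2.ind with
  | _ u v =>
  have huv : u ≠ v := fun h => hsimple _ hf (Sym2.mk_isDiag_iff.2 h)
  obtain ⟨hu, hv⟩ := pairIn_mk.1 hfL
  simp only [mem_insert] at hu hv
  have hvu : s(v, u) ∈ E := by rwa [Sym2.eq_swap]
  rcases hu with rfl | rfl | hu <;> rcases hv with rfl | rfl | hv
  all_goals first
    | exact absurd rfl huv
    | exact absurd rfl hfe
    | exact absurd Sym2.eq_swap hfe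
    | exact ⟨_, hv, .inl hf⟩
    | exact ⟨_, hv, .inr hf⟩
    | exact ⟨_, hu, .inl hvu⟩
    | exact ⟨_, hu, .inr hvu⟩
    | exact absurd ⟨_, hf, pairIn_mk.2 ⟨hu, hv⟩⟩ hL

lemma le_bernProb_coversOnly (hp0 : 0 ≤ p) (hp1 : p ≤ 1) (hsimple : ∀ e ∈ E, ¬ e.IsDiag)
    {e : Sym2 (Fin n)} (he : e ∈ E) :
    p ^ 2 * (1 - bernProb n p (covers E) - 2 * maxDeg E * p) ≤ bernProb n p (coversOnly E e) := by
  induction e using Sym2.ind with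
  | _ a b =>
  have hab : a ≠ b := fun h => hsimple _ he (Sym2.mk_isDiag_iff.2 h)
  have hW := testWeight_nonneg (n := n) hp0 hp1
  set N : Finset (Fin n) := ({x | s(a, x) ∈ E} : Finset _) ∪ ({x | s(b, x) ∈ E} : Finset _)
  have hsplit : ∀ L, ¬ covers E L →
      coversOnly E s(a, b) (insert a (insert b L)) ∨ ∃ x ∈ N, x ∈ L := by
    refine fun L hL => or_iff_not_imp_left.2 fun hD => ?_
    obtain ⟨x, hx, hxE⟩ := exists_adj_mem_of_not_covers hsimple hL hD
    exact ⟨x, by simpa [N] using hxE, hx⟩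
  have hN : bernProb n p (fun L => ∃ x ∈ N, x ∈ L) ≤ 2 * maxDeg E * p :=
    calc _ ≤ ∑ x ∈ N, bernProb n p (fun L => x ∈ L) := eventMass_exists_le hW N _
      _ = #N * p := by simp [bernProb_mem]
      _ ≤ 2 * maxDeg E * p := by
          gcongr
          have := (card_union_le _ _).trans
            (add_le_add (card_adj_le_maxDeg E a) (card_adj_le_maxDeg E b))
          exact_mod_cast this.trans_eq (two_mul _).symm
  have hD : 1 - bernProb n p (covers E)
      ≤ bernProb n p (fun L => coversOnly E s(a, b) (insert a (insert b L)))
        + 2 * maxDeg E * p := by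
    rw [← bernProb_not]
    exact (eventMass_mono hW hsplit).trans ((eventMass_or_le hW _ _).trans (add_le_add le_rfl hN))
  rw [bernProb_coversOnly_mk hab]
  exact mul_le_mul_of_nonneg_left (by linarith) (sq_nonneg p)

lemma bernProb_not_coversOnly_and_not {e e' : Sym2 (Fin n)} (he' : e' ∈ E) (hne : e ≠ e') :
    bernProb n p (fun L => ¬ coversOnly E e L ∧ ¬ coversOnly E e' L)
      = 1 - bernProb n p (coversOnly E e) - bernProb n p (coversOnly E e') := by
  have hdisj : bernProb n p (fun L => coversOnly E e L ∨ coversOnly E e' L)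
      = bernProb n p (coversOnly E e) + bernProb n p (coversOnly E e') :=
    eventMass_or_of_disjoint fun L h => hne (h.1.2 e' he' h.2.1).symm
  simp only [← not_or]
  rw [bernProb_not, hdisj]
  ring

end Masking

theorem statement14_general (n t k d : ℕ) (p : ℝ) (hp0 : 0 ≤ p) (hp1 : p ≤ 1)
    (E : Finset (Sym2 (Fin n))) (hsimple : ∀ e ∈ E, ¬ e.IsDiag)
    (hk : E.card = k) (hmax : maxDeg E = d)
    (hass : p ^ 2 * (1 - bernProb n p (covers E) + (1 + 2 * d) * p ^ 2) ≤ 1) :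
    (k : ℝ) *
        (1 - p ^ 2 * (1 - bernProb n p (covers E) + (1 + 2 * d) * p ^ 2)) ^ (2 * t) /
        ((1 - p ^ 2 * (1 - bernProb n p (covers E) - 2 * d * p)) ^ t +
          (k : ℝ) * (max 0 (1 - 2 * p ^ 2 * (1 - bernProb n p (covers E) - 2 * d * p))) ^ t)
      ≤ bernTestsProb n t p (fun Ls => ∃ e ∈ E,
          ∀ i, pairIn e (Ls i) → ∃ e' ∈ E, e' ≠ e ∧ pairIn e' (Ls i)) := by
  subst hk hmax
  have hW := testWeight_nonneg (n := n) hp0 hp1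
  have hlow e (he : e ∈ E) := le_bernProb_coversOnly hp0 hp1 hsimple he
  have hupp e (he : e ∈ E) : bernProb n p (coversOnly E e)
      ≤ p ^ 2 * (1 - bernProb n p (covers E) + (1 + 2 * maxDeg E) * p ^ 2) := by
    refine (bernProb_coversOnly_le hp0 hp1 (hsimple e he)).trans ?_
    gcongr
    nlinarith [sq_nonneg p, (Nat.cast_nonneg (maxDeg E) : (0 : ℝ) ≤ _)]
  simp only [masked_iff]
  rw [pow_mul']
  refine card_mul_sq_div_le_eventMass_exists (testsWeight_nonneg hp0 hp1)
    (pow_nonneg (by linarith) t) (pow_nonneg (le_max_left _ _) t)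
    (fun e he => ?_) (fun e he => ?_) (fun e he e' he' hne => ?_)
  · refine le_of_le_of_eq ?_ (bernTestsProb_forall (p := p) t (¬ coversOnly E e ·)).symm
    gcongr
    rw [bernProb_not]
    linarith [hupp e he]
  · refine (bernTestsProb_forall (p := p) t (¬ coversOnly E e ·)).trans_le ?_
    gcongr
    · exact eventMass_nonneg hW _
    · rw [bernProb_not]; linarith [hlow e he]
  · simp only [← forall_and]
    refine (bernTestsProb_forall (p := p) t
      (fun L => ¬ coversOnly E e L ∧ ¬ coversOnly E e' L)).trans_le ?_
    gcongr
    · exact eventMass_nonneg hW _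
    · rw [bernProb_not_coversOnly_and_not he' hne]
      exact le_max_of_le_right (by linarith [hlow e he, hlow e' he'])

/-- de Caen lower bound on the probability of some masked edge.
Let `G` have `k ≥ 1` edges and maximum degree `d`, and perform `t` i.i.d. Bernoulli(p)
tests.  With `P₁ = P_G[Y=1]`, `ξ = (1+2d)p²`, `ξ′ = 2dp`, and assuming
`p²(1 − P₁ + ξ) ≤ 1`, the probability that at least one edge is masked is at least
`k(1 − p²(1−P₁+ξ))^{2t} / ((1 − p²(1−P₁−ξ′))^t + k·max(0, 1 − 2p²(1−P₁−ξ′))^t)`. -/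
theorem statement14 (n t k d : ℕ) (p : ℝ) (hp0 : 0 ≤ p) (hp1 : p ≤ 1)
    (E : Finset (Sym2 (Fin n))) (hsimple : ∀ e ∈ E, ¬ e.IsDiag)
    (hk : E.card = k) (hk1 : 1 ≤ k) (hmax : maxDeg E = d)
    (hass : p ^ 2 * (1 - bernProb n p (covers E) + (1 + 2 * d) * p ^ 2) ≤ 1) :
    (k : ℝ) *
        (1 - p ^ 2 * (1 - bernProb n p (covers E) + (1 + 2 * d) * p ^ 2)) ^ (2 * t) /
        ((1 - p ^ 2 * (1 - bernProb n p (covers E) - 2 * d * p)) ^ t +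
          (k : ℝ) * (max 0 (1 - 2 * p ^ 2 * (1 - bernProb n p (covers E) - 2 * d * p))) ^ t)
      ≤ bernTestsProb n t p (fun Ls => ∃ e ∈ E,
          ∀ i, pairIn e (Ls i) → ∃ e' ∈ E, e' ≠ e ∧ pairIn e' (Ls i)) :=
  statement14_general n t k d p hp0 hp1 E hsimple hk hmax hass
end
end
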